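/- Let J be the collection of all maximal dyadic intervals J such that 3J does not contain I_Q for any Q in a fixed nonempty finite tree T of bi-tiles. Then J is a partition of ℝ (up to measure zero): the intervals in J are pairwise disjoint and their union covers ℝ. Moreover, every J ∈ J satisfying J ∩ 3I_T ≠ ∅ and contributing a bi-tile Q ∈ T with |I_Q| > |J| satisfies J ⊆ 3I_T, and ∑_{J ∈ J: J ⊆ 3I_T} |J| ≤ 3|I_T|. -/
import Mathlib


open Set

/-- The dyadic interval `[2^j k, 2^j (k+1))`. -/
noncomputable def dyadic (j k : ℤ) : Set ℝ :=
  Set.Ico ((2 : ℝ) ^ j * (k : ℝ)) ((2 : ℝ) ^ j * ((k : ℝ) + 1))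

/-- The interval `3J` with the same center as `dyadic j k` and three times its length. -/
noncomputable def dyadic3 (j k : ℤ) : Set ℝ :=
  Set.Ico ((2 : ℝ) ^ j * ((k : ℝ) - 1)) ((2 : ℝ) ^ j * ((k : ℝ) + 2))

lemma tzp (j : ℤ) : (0:ℝ) < 2 ^ j := zpow_pos two_pos j

lemma tz_le (j j' : ℤ) : (2:ℝ) ^ j ≤ 2 ^ j' ↔ j ≤ j' := by
  exact zpow_le_zpow_iff_right₀ one_lt_two

lemma tz_lt (j j' : ℤ) : (2:ℝ) ^ j < 2 ^ j' ↔ j < j' := by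
  exact zpow_lt_zpow_iff_right₀ one_lt_two

lemma exists_mul {j j' : ℤ} (h : j ≤ j') : ∃ n : ℤ, 1 ≤ n ∧ (2:ℝ)^j' = 2^j * n := by
  refine ⟨2 ^ (j' - j).toNat, one_le_pow₀ one_le_two, ?_⟩
  push_cast
  rw [← zpow_natCast (2:ℝ), ← zpow_add₀ (two_ne_zero)]
  congr 1
  omega

lemma dyadic_lb {j k : ℤ} : (2:ℝ)^j * k < 2^j * (k+1) := by
  have := tzp j; nlinarith

lemma key_sub {j k j' : ℤ} (h : j ≤ j') (a b : ℤ)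
    (hne : (dyadic j k ∩ Set.Ico ((2:ℝ)^j' * a) ((2:ℝ)^j' * b)).Nonempty) :
    dyadic j k ⊆ Set.Ico ((2:ℝ)^j' * a) ((2:ℝ)^j' * b) := by
  obtain ⟨x, hx1, hx2⟩ := hne
  obtain ⟨n, hn1, hn2⟩ := exists_mul h
  simp only [dyadic, Set.mem_Ico] at hx1 ⊢
  obtain ⟨hx1a, hx1b⟩ := hx1
  obtain ⟨hx2a, hx2b⟩ := hx2
  rw [hn2] at hx2a hx2b ⊢
  have hp := tzp j
  -- n*a ≤ k and k+1 ≤ n*b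
  have h1 : (n:ℝ) * a ≤ k := by
    have : (2:ℝ)^j * (n * a) < 2^j * (k+1) := by
      calc (2:ℝ)^j * (n*a) = 2^j * n * a := by ring
      _ ≤ x := hx2a
      _ < _ := hx1b
    have := (mul_lt_mul_iff_right₀ hp).mp this
    have : ((n*a : ℤ):ℝ) < ((k+1 : ℤ):ℝ) := by push_cast; linarith
    have := Int.lt_iff_add_one_le.mp (by exact_mod_cast this)
    push_cast
    exact_mod_cast (by omega : n*a ≤ k)
  have h2 : (k:ℝ) + 1 ≤ n * b := by
    have : (2:ℝ)^j * k < 2^j * (n*b) := by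
      calc (2:ℝ)^j * k ≤ x := hx1a
      _ < 2^j * n * b := hx2b
      _ = 2^j * (n*b) := by ring
    have := (mul_lt_mul_iff_right₀ hp).mp this
    have : ((k : ℤ):ℝ) < ((n*b : ℤ):ℝ) := by push_cast; linarith
    have := Int.lt_iff_add_one_le.mp (by exact_mod_cast this)
    have : ((k+1 : ℤ):ℝ) ≤ ((n*b : ℤ):ℝ) := by exact_mod_cast this
    push_cast at this ⊢; linarith
  intro y hy
  simp only [Set.mem_Ico] at hy ⊢
  constructor
  · calc (2:ℝ)^j * n * a = 2^j * (n*a) := by ring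
    _ ≤ 2^j * k := by nlinarith
    _ ≤ y := hy.1
  · calc y < 2^j * (k+1) := hy.2
    _ ≤ 2^j * (n*b) := by nlinarith
    _ = 2^j * n * b := by ring

lemma dyadic_subset_le {j k j' k' : ℤ} (h : dyadic j k ⊆ dyadic j' k') : j ≤ j' := by
  rw [dyadic, dyadic, Set.Ico_subset_Ico_iff dyadic_lb] at h
  rw [← tz_le]
  nlinarith [h.1, h.2]

lemma dyadic_inj {j k j' k' : ℤ} (h : dyadic j k = dyadic j' k') : j = j' ∧ k = k' := by
  have hj : j = j' := le_antisymm (dyadic_subset_le h.le) (dyadic_subset_le h.ge)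
  subst hj
  refine ⟨rfl, ?_⟩
  have h1 := h.subset; have h2 := h.superset
  rw [dyadic, dyadic, Set.Ico_subset_Ico_iff dyadic_lb] at h1 h2
  have hp := tzp j
  have a1 : (k':ℝ) ≤ k := le_of_mul_le_mul_left h1.1 hp
  have a2 : (k:ℝ) ≤ k' := le_of_mul_le_mul_left h2.1 hp
  exact_mod_cast le_antisymm a2 a1

lemma mem_dyadic_floor (j : ℤ) (x : ℝ) : x ∈ dyadic j ⌊x / 2^j⌋ := by
  have hp := tzp j
  constructor
  · rw [mul_comm]
    exact (le_div_iff₀ hp).mp (Int.floor_le _)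
  · rw [mul_comm]
    exact (div_lt_iff₀ hp).mp (Int.lt_floor_add_one _)

lemma mem_dyadic_unique {j k : ℤ} {x : ℝ} (hx : x ∈ dyadic j k) : k = ⌊x / 2^j⌋ := by
  have hp := tzp j
  obtain ⟨h1, h2⟩ := hx
  symm
  rw [Int.floor_eq_iff]
  constructor
  · exact (le_div_iff₀ hp).mpr (by linarith [h1])
  · exact (div_lt_iff₀ hp).mpr (by linarith [h2])

lemma sub3_len {jq kq j k : ℤ} (h : dyadic jq kq ⊆ dyadic3 j k) : (2:ℝ)^jq ≤ 3 * 2^j := by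
  rw [dyadic, dyadic3, Set.Ico_subset_Ico_iff dyadic_lb] at h
  nlinarith [h.1, h.2]

open MeasureTheory in
lemma vol_dyadic (j k : ℤ) : MeasureTheory.volume (dyadic j k) = ENNReal.ofReal ((2:ℝ)^j) := by
  rw [dyadic, Real.volume_Ico]; congr 1; ring

open MeasureTheory in
lemma vol_dyadic3 (j k : ℤ) : MeasureTheory.volume (dyadic3 j k) = ENNReal.ofReal (3 * (2:ℝ)^j) := by
  rw [dyadic3, Real.volume_Ico]; congr 1; ring

/-- The collection `𝒥` of maximal dyadic intervals `J` such that `3J` contains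
no `I_Q`, `Q ∈ T`, partitions `ℝ`; moreover every `J ∈ 𝒥` meeting `3I_T` for
which some `Q ∈ T` has `|I_Q| > |J|` satisfies `J ⊆ 3I_T`, and
`∑_{J ∈ 𝒥, J ⊆ 3I_T} |J| ≤ 3|I_T|`. -/
theorem stmt14 {ι : Type*} (T : Finset ι) (hT : T.Nonempty)
    (jQ kQ : ι → ℤ) (jT kT : ℤ)
    (htop : ∀ q ∈ T, dyadic (jQ q) (kQ q) ⊆ dyadic jT kT) :
    let Good : ℤ → ℤ → Prop := fun j k => ∀ q ∈ T, ¬ dyadic (jQ q) (kQ q) ⊆ dyadic3 j k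
    let 𝒥 : Set (ℤ × ℤ) := {p | Good p.1 p.2 ∧
      ∀ j' k' : ℤ, Good j' k' → dyadic p.1 p.2 ⊆ dyadic j' k' →
        dyadic p.1 p.2 = dyadic j' k'}
    (∀ p ∈ 𝒥, ∀ q ∈ 𝒥, dyadic p.1 p.2 ≠ dyadic q.1 q.2 →
        Disjoint (dyadic p.1 p.2) (dyadic q.1 q.2)) ∧
    (∀ x : ℝ, ∃ p ∈ 𝒥, x ∈ dyadic p.1 p.2) ∧
    (∀ p ∈ 𝒥, (dyadic p.1 p.2 ∩ dyadic3 jT kT).Nonempty →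
      (∃ q ∈ T, (2 : ℝ) ^ p.1 < (2 : ℝ) ^ (jQ q)) →
      dyadic p.1 p.2 ⊆ dyadic3 jT kT) ∧
    (∑' p : {p : ℤ × ℤ // p ∈ 𝒥 ∧ dyadic p.1 p.2 ⊆ dyadic3 jT kT},
        (2 : ℝ) ^ (p.val.1)) ≤ 3 * (2 : ℝ) ^ jT := by
  intro Good 𝒥
  -- Part 1: disjointness
  have part1 : ∀ p ∈ 𝒥, ∀ q ∈ 𝒥, dyadic p.1 p.2 ≠ dyadic q.1 q.2 →
      Disjoint (dyadic p.1 p.2) (dyadic q.1 q.2) := by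
    intro p hp q hq hne
    by_contra hcon
    rw [Set.not_disjoint_iff_nonempty_inter] at hcon
    rcases le_total p.1 q.1 with hle | hle
    · have hd : dyadic q.1 q.2 =
          Set.Ico ((2:ℝ)^q.1 * ((q.2 : ℤ):ℝ)) ((2:ℝ)^q.1 * ((q.2 + 1 : ℤ):ℝ)) := by
        rw [dyadic]; push_cast; ring_nf
      have hsub := key_sub hle q.2 (q.2+1) (by rw [← hd]; exact hcon)
      rw [← hd] at hsub
      exact hne (hp.2 _ _ hq.1 hsub)
    · have hd : dyadic p.1 p.2 =
          Set.Ico ((2:ℝ)^p.1 * ((p.2 : ℤ):ℝ)) ((2:ℝ)^p.1 * ((p.2 + 1 : ℤ):ℝ)) := by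
        rw [dyadic]; push_cast; ring_nf
      have hcon' : (dyadic q.1 q.2 ∩ dyadic p.1 p.2).Nonempty := by
        rwa [Set.inter_comm]
      have hsub := key_sub hle p.2 (p.2+1) (by rw [← hd]; exact hcon')
      rw [← hd] at hsub
      exact hne ((hq.2 _ _ hp.1 hsub).symm)
  refine ⟨part1, ?_, ?_, ?_⟩
  · -- Part 2: cover
    intro x
    obtain ⟨q0, hq0⟩ := id hT
    set P : ℤ → Prop := fun j => Good j ⌊x / 2^j⌋ with hP
    have hS0 : P (T.inf' hT jQ - 2) := by
      intro q hq hsub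
      have hlen := sub3_len hsub
      have h1 : T.inf' hT jQ ≤ jQ q := Finset.inf'_le _ hq
      have h2 : (2:ℝ)^(T.inf' hT jQ) ≤ 2^(jQ q) := (tz_le _ _).mpr h1
      have h3 : (2:ℝ)^(T.inf' hT jQ - 2) = 2^(T.inf' hT jQ) / 4 := by
        rw [zpow_sub₀ two_ne_zero]; norm_num
      nlinarith [tzp (T.inf' hT jQ)]
    obtain ⟨n, hn⟩ := pow_unbounded_of_one_lt
      (max (x - 2^jT * kT) (2^jT * ((kT:ℝ)+1) - x)) (one_lt_two (α := ℝ))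
    have hbd : ∀ j : ℤ, P j → j ≤ n := by
      intro j hGj
      by_contra hc
      push_neg at hc
      apply hGj q0 hq0
      refine (htop q0 hq0).trans ?_
      have hx := mem_dyadic_floor j x
      obtain ⟨hxa, hxb⟩ := hx
      have h2j : max (x - 2^jT * kT) (2^jT * ((kT:ℝ)+1) - x) < 2^j := by
        calc _ < (2:ℝ)^n := hn
        _ = (2:ℝ)^(n:ℤ) := (zpow_natCast 2 n).symm
        _ ≤ 2^j := (tz_le _ _).mpr (by omega)
      have hm1 : x - 2^jT * kT < (2:ℝ)^j := lt_of_le_of_lt (le_max_left _ _) h2j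
      have hm2 : 2^jT * ((kT:ℝ)+1) - x < (2:ℝ)^j := lt_of_le_of_lt (le_max_right _ _) h2j
      rw [dyadic, dyadic3]
      apply Set.Ico_subset_Ico
      · nlinarith [hxa, hm1]
      · nlinarith [hxb, hm2]
    obtain ⟨j0, hj0P, hj0max⟩ := Int.exists_greatest_of_bdd ⟨n, hbd⟩ ⟨_, hS0⟩
    refine ⟨(j0, ⌊x / 2^j0⌋), ⟨hj0P, ?_⟩, mem_dyadic_floor j0 x⟩
    intro j' k' hG' hsub
    have hxm : x ∈ dyadic j' k' := hsub (mem_dyadic_floor j0 x)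
    have hk' : k' = ⌊x / 2^j'⌋ := mem_dyadic_unique hxm
    have hj' : j' ≤ j0 := hj0max j' (by rw [hP]; simpa [← hk'] using hG')
    have hj'' : j0 ≤ j' := dyadic_subset_le hsub
    have : j' = j0 := le_antisymm hj' hj''
    subst this
    have : k' = ⌊x / 2^j'⌋ := hk'
    rw [this]
  · -- Part 3
    rintro p hp hne ⟨q, hq, hlt⟩
    have hjq : jQ q ≤ jT := dyadic_subset_le (htop q hq)
    have hple : p.1 ≤ jT := le_of_lt (lt_of_lt_of_le ((tz_lt _ _).mp hlt) hjq)
    have hd3 : dyadic3 jT kT =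
        Set.Ico ((2:ℝ)^jT * ((kT - 1 : ℤ):ℝ)) ((2:ℝ)^jT * ((kT + 2 : ℤ):ℝ)) := by
      rw [dyadic3]; push_cast; ring_nf
    rw [hd3] at hne ⊢
    exact key_sub hple _ _ hne
  · -- Part 4
    apply tsum_le_of_sum_le' (by positivity)
    intro s
    have hdisj : (↑s : Set {p : ℤ × ℤ // p ∈ 𝒥 ∧ dyadic p.1 p.2 ⊆ dyadic3 jT kT}).PairwiseDisjoint
        (fun p => dyadic p.val.1 p.val.2) := by
      intro p _ q _ hpq
      apply part1 p.val p.2.1 q.val q.2.1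
      intro heq
      obtain ⟨h1, h2⟩ := dyadic_inj heq
      exact hpq (Subtype.ext (Prod.ext h1 h2))
    have hsum := MeasureTheory.measure_biUnion_finset (μ := MeasureTheory.volume) hdisj
      (fun p _ => measurableSet_Ico)
    have hub : (⋃ p ∈ s, dyadic p.val.1 p.val.2) ⊆ dyadic3 jT kT :=
      Set.iUnion₂_subset fun p _ => p.2.2
    have h1 : ∑ p ∈ s, ENNReal.ofReal ((2:ℝ)^(p.val.1)) ≤ ENNReal.ofReal (3 * 2^jT) := by
      calc ∑ p ∈ s, ENNReal.ofReal ((2:ℝ)^(p.val.1))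
          = ∑ p ∈ s, MeasureTheory.volume (dyadic p.val.1 p.val.2) := by
            exact Finset.sum_congr rfl fun p _ => (vol_dyadic _ _).symm
        _ = MeasureTheory.volume (⋃ p ∈ s, dyadic p.val.1 p.val.2) := hsum.symm
        _ ≤ MeasureTheory.volume (dyadic3 jT kT) := MeasureTheory.measure_mono hub
        _ = _ := vol_dyadic3 _ _
    rw [← ENNReal.ofReal_sum_of_nonneg (fun p _ => (tzp _).le)] at h1
    exact (ENNReal.ofReal_le_ofReal_iff (by positivity)).mp h1
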